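/- arXiv:1101.3904 — 2 statements merged into one kernel-verified Lean document; each statement's English description precedes it below -/
import Mathlib

section
/- Let f(u) = 1/(1-u) on (-∞,1). For any real numbers u*, v with u* ≤ v < 1, setting u₀ = (u* + v)/2, one has (1/2)(f(v) + f(u*)) ≥ f(u₀) + (1/16)·(u* - v)²/(1-u₀)³ (and in particular ≥ f(u₀) + (1/16)·(u*-v)²/(1-u₀)² when 1-u₀ ≤ 1). -/
/-- Key convexity estimate for `f(u) = 1/(1-u)`: for `u* ≤ v < 1` and `u₀ = (u*+v)/2`,
`(1/2)(f v + f u*) ≥ f u₀ + (1/16)(u*-v)²/(1-u₀)³`, and in particular the same bound with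
`(1-u₀)²` in the denominator when `1 - u₀ ≤ 1`. -/
theorem stmt_1 (f : ℝ → ℝ) (hf : ∀ u : ℝ, u < 1 → f u = 1 / (1 - u))
    (ustar v : ℝ) (huv : ustar ≤ v) (hv : v < 1) :
    (1 / 2) * (f v + f ustar) ≥
      f ((ustar + v) / 2) + (1 / 16) * (ustar - v) ^ 2 / (1 - (ustar + v) / 2) ^ 3 ∧
    (1 - (ustar + v) / 2 ≤ 1 →
      (1 / 2) * (f v + f ustar) ≥
        f ((ustar + v) / 2) + (1 / 16) * (ustar - v) ^ 2 / (1 - (ustar + v) / 2) ^ 2) := by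
  have hu : ustar < 1 := lt_of_le_of_lt huv hv
  have hu0 : (ustar + v) / 2 < 1 := by linarith
  have ha : (0:ℝ) < 1 - ustar := by linarith
  have hb : (0:ℝ) < 1 - v := by linarith
  have hx : (0:ℝ) < 1 - (ustar + v) / 2 := by linarith
  rw [hf v hv, hf ustar hu, hf _ hu0]
  have key : (1 / 2) * (1 / (1 - v) + 1 / (1 - ustar)) ≥
      1 / (1 - (ustar + v) / 2) + (1 / 16) * (ustar - v) ^ 2 / (1 - (ustar + v) / 2) ^ 3 := by
    rw [ge_iff_le]
    have hne1 : (1 - v) ≠ 0 := hb.ne'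
    have hne2 : (1 - ustar) ≠ 0 := ha.ne'
    have hne3 : (1 - (ustar + v) / 2) ≠ 0 := hx.ne'
    rw [div_add_div _ _ hne3 (by positivity : (1 - (ustar + v) / 2) ^ 3 ≠ 0),
      div_le_iff₀ (by positivity)]
    have hrw : (1:ℝ) / 2 * (1 / (1 - v) + 1 / (1 - ustar)) = (2 - ustar - v) / (2 * ((1 - v) * (1 - ustar))) := by
      field_simp; ring
    rw [hrw, div_mul_eq_mul_div (2 - ustar - v), le_div_iff₀ (by positivity)]
    nlinarith [sq_nonneg ((ustar - v) * (2 - ustar - v)), mul_pos ha hb, hx,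
      mul_nonneg (mul_nonneg (sq_nonneg (ustar - v)) (sq_nonneg (ustar - v))) hx.le,
      mul_nonneg (mul_nonneg (sq_nonneg (ustar - v)) (mul_pos ha hb).le) hx.le]
  refine ⟨key, fun hle => ?_⟩
  have h2 : (1 / 16) * (ustar - v) ^ 2 / (1 - (ustar + v) / 2) ^ 2 ≤
      (1 / 16) * (ustar - v) ^ 2 / (1 - (ustar + v) / 2) ^ 3 := by
    apply div_le_div_of_nonneg_left (by positivity) (by positivity)
    calc (1 - (ustar + v) / 2) ^ 3 ≤ (1 - (ustar + v) / 2) ^ 2 := by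
          nlinarith [sq_nonneg (1 - (ustar + v) / 2)]
      _ ≤ (1 - (ustar + v) / 2) ^ 2 := le_refl _
  linarith
end

section
/- Let g_β(r) = (C₀ - log r)^β with C₀ > 0 and β ∈ (0,1), and n > 2. Then the radial biharmonic operator applied to r² g_β satisfies Δ²(r² g_β)(r) ≤ β r^{-2} · 2n(n-2) · g_{β-1}(r) for all r ∈ (0,1) with C₀ - log r ≥ 1. -/
/-!
With `L = C₀ - log r` and `∂ = d/dL`, the radial Laplacian acts on `r^k h(L)` as
`r^(k-2) (k - ∂)(k + n - 2 - ∂) h`. Hence `Δ²(r² g_β) = r⁻² ∂(∂ - (n-2))(∂ - 2)(∂ - n) L^β`,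
and expanding with `∂ʲ L^β = β(β-1)⋯(β-j+1) L^(β-j)` gives a four-term expansion.
For `β ∈ (0,1)` the last three terms are nonpositive, leaving `β r⁻² 2n(2-n) g_{β-1} ≤ 0`.
-/

noncomputable def radLap (n : ℕ) (f : ℝ → ℝ) (r : ℝ) : ℝ :=
  deriv (deriv f) r + ((n : ℝ) - 1) / r * deriv f r

/-- `g_β(r) = (C₀ - log r)^β`. -/
noncomputable def gfun (C₀ β : ℝ) (r : ℝ) : ℝ := (C₀ - Real.log r) ^ β

open Filter Topology

section RadialLaplacian

variable {n : ℕ} {f g : ℝ → ℝ} {r : ℝ}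

theorem radLap_congr_of_eventuallyEq (h : f =ᶠ[𝓝 r] g) : radLap n f r = radLap n g r := by
  rw [radLap, radLap, h.deriv.deriv_eq, h.deriv_eq]

theorem radLap_eq_of_hasDerivAt {f' : ℝ → ℝ} {f'' : ℝ}
    (hf : ∀ᶠ t in 𝓝 r, HasDerivAt f (f' t) t) (hf' : HasDerivAt f' f'' r) :
    radLap n f r = f'' + ((n : ℝ) - 1) / r * f' r := by
  have hderiv : deriv f =ᶠ[𝓝 r] f' := hf.mono fun t ht => ht.deriv
  rw [radLap, hderiv.deriv_eq, hf'.deriv, hf.self_of_nhds.deriv]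

theorem radLap_zpow_mul_comp_log (k : ℤ) (C₀ : ℝ) {h h' : ℝ → ℝ} {h'' : ℝ} (hr : 0 < r)
    (hh : ∀ᶠ x in 𝓝 (C₀ - Real.log r), HasDerivAt h (h' x) x)
    (hh' : HasDerivAt h' h'' (C₀ - Real.log r)) :
    radLap n (fun t => t ^ k * h (C₀ - Real.log t)) r =
      r ^ (k - 2) * (k * (k + n - 2) * h (C₀ - Real.log r)
        - (2 * k + n - 2) * h' (C₀ - Real.log r) + h'') := by
  have hL : ∀ t, 0 < t → HasDerivAt (fun t => C₀ - Real.log t) (-t⁻¹) t := fun t ht =>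
    (Real.hasDerivAt_log ht.ne').const_sub C₀
  have hLcont : Tendsto (fun t => C₀ - Real.log t) (𝓝 r) (𝓝 (C₀ - Real.log r)) :=
    (hL r hr).continuousAt.tendsto
  have hfirst : ∀ᶠ t in 𝓝 r, HasDerivAt (fun t => t ^ k * h (C₀ - Real.log t))
      (t ^ (k - 1) * (k * h (C₀ - Real.log t) - h' (C₀ - Real.log t))) t := by
    filter_upwards [eventually_gt_nhds hr, hLcont.eventually hh] with t ht hht
    refine ((hasDerivAt_zpow k t (Or.inl ht.ne')).mul (hht.comp t (hL t ht))).congr_deriv ?_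
    rw [zpow_sub_one₀ ht.ne', Function.comp_apply]
    field_simp
    ring
  have hsecond := ((hasDerivAt_zpow (k - 1) r (Or.inl hr.ne')).mul
    (((hh.self_of_nhds.comp r (hL r hr)).const_mul (k : ℝ)).sub (hh'.comp r (hL r hr))))
  rw [radLap_eq_of_hasDerivAt hfirst hsecond]
  simp only [Function.comp_apply, Pi.sub_apply]
  push_cast
  rw [show k - 1 - 1 = k - 2 by ring, show k - 1 = k - 2 + 1 by ring, zpow_add_one₀ hr.ne']
  field_simp
  ring

end RadialLaplacian

theorem hasDerivAt_three_term_rpow (a b c p : ℝ) {x : ℝ} (hx : 0 < x) :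
    HasDerivAt (fun y => a * y ^ p + b * y ^ (p - 1) + c * y ^ (p - 2))
      (a * p * x ^ (p - 1) + b * (p - 1) * x ^ (p - 2) + c * (p - 2) * x ^ (p - 3)) x := by
  have hpow (q : ℝ) : HasDerivAt (fun y => y ^ q) (q * x ^ (q - 1)) x :=
    Real.hasDerivAt_rpow_const (Or.inl hx.ne')
  have h := (((hpow p).const_mul a).fun_add ((hpow (p - 1)).const_mul b)).fun_add
    ((hpow (p - 2)).const_mul c)
  rw [show p - 1 - 1 = p - 2 by ring, show p - 2 - 1 = p - 3 by ring] at h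
  exact h.congr_deriv (by ring)

section LogPower

variable {n : ℕ} {C₀ β r : ℝ}

theorem radLap_sq_mul_gfun (hr : 0 < r) (hL : 0 < C₀ - Real.log r) :
    radLap n (fun s => s ^ 2 * gfun C₀ β s) r =
      2 * n * gfun C₀ β r - (n + 2) * β * gfun C₀ (β - 1) r + β * (β - 1) * gfun C₀ (β - 2) r := by
  have hF : (fun s => s ^ 2 * gfun C₀ β s) = fun t => t ^ (2 : ℤ) * (C₀ - Real.log t) ^ β := by
    simp only [gfun, zpow_ofNat]
  have hh : ∀ᶠ x in 𝓝 (C₀ - Real.log r), HasDerivAt (fun x => x ^ β) (β * x ^ (β - 1)) x :=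
    (eventually_gt_nhds hL).mono fun x hx => Real.hasDerivAt_rpow_const (Or.inl hx.ne')
  have hh' := (Real.hasDerivAt_rpow_const (x := C₀ - Real.log r) (p := β - 1)
    (Or.inl hL.ne')).const_mul β
  rw [show β - 1 - 1 = β - 2 by ring, ← mul_assoc] at hh'
  rw [hF, radLap_zpow_mul_comp_log 2 C₀ hr hh hh']
  simp only [gfun]
  norm_num
  ring

theorem radLap_radLap_sq_mul_gfun (hr : 0 < r) (hL : 0 < C₀ - Real.log r) :
    radLap n (radLap n (fun s => s ^ 2 * gfun C₀ β s)) r =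
      β * r ^ (-2 : ℤ) * (2 * n * (2 - n) * gfun C₀ (β - 1) r
        + (β - 1) * (2 * n + n ^ 2 - 4) * gfun C₀ (β - 2) r
        - 2 * n * (β - 1) * (β - 2) * gfun C₀ (β - 3) r
        + (β - 1) * (β - 2) * (β - 3) * gfun C₀ (β - 4) r) := by
  have hLcont : Tendsto (fun t => C₀ - Real.log t) (𝓝 r) (𝓝 (C₀ - Real.log r)) :=
    (continuousAt_const.sub (Real.continuousAt_log hr.ne')).tendsto
  have hloc : radLap n (fun s => s ^ 2 * gfun C₀ β s) =ᶠ[𝓝 r] fun t => t ^ (0 : ℤ) *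
      (fun x => 2 * n * x ^ β + (-(n + 2) * β) * x ^ (β - 1) + β * (β - 1) * x ^ (β - 2))
        (C₀ - Real.log t) := by
    filter_upwards [eventually_gt_nhds hr, hLcont.eventually (eventually_gt_nhds hL)]
      with t ht hLt
    rw [radLap_sq_mul_gfun ht hLt, zpow_zero, one_mul, gfun, gfun, gfun]
    ring
  have hH := (eventually_gt_nhds hL).mono fun x hx =>
    hasDerivAt_three_term_rpow (2 * n) (-(n + 2) * β) (β * (β - 1)) β hx
  have hH₁ := hasDerivAt_three_term_rpow (2 * n * β) (-(n + 2) * β * (β - 1))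
    (β * (β - 1) * (β - 2)) (β - 1) hL
  rw [show β - 1 - 1 = β - 2 by ring, show β - 1 - 2 = β - 3 by ring,
    show β - 1 - 3 = β - 4 by ring] at hH₁
  rw [radLap_congr_of_eventuallyEq hloc, radLap_zpow_mul_comp_log 0 C₀ hr hH hH₁]
  simp only [gfun]
  norm_num
  ring

theorem radLap_radLap_sq_mul_gfun_le (hn : 2 ≤ n) (hβ₀ : 0 < β) (hβ₁ : β < 1) (hr : 0 < r)
    (hL : 0 < C₀ - Real.log r) :
    radLap n (radLap n (fun s => s ^ 2 * gfun C₀ β s)) r ≤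
      β * r ^ (-2 : ℤ) * (2 * n * (2 - (n : ℝ))) * gfun C₀ (β - 1) r := by
  have hn' : (2 : ℝ) ≤ n := by exact_mod_cast hn
  have hg (α : ℝ) : 0 ≤ gfun C₀ α r := Real.rpow_nonneg hL.le α
  have h₂ : (β - 1) * (2 * n + n ^ 2 - 4) * gfun C₀ (β - 2) r ≤ 0 :=
    mul_nonpos_of_nonpos_of_nonneg
      (mul_nonpos_of_nonpos_of_nonneg (by linarith) (by nlinarith)) (hg _)
  have h₃ : 0 ≤ 2 * n * (β - 1) * (β - 2) * gfun C₀ (β - 3) r :=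
    mul_nonneg (mul_nonneg_of_nonpos_of_nonpos
      (mul_nonpos_of_nonneg_of_nonpos (by positivity) (by linarith)) (by linarith)) (hg _)
  have h₄ : (β - 1) * (β - 2) * (β - 3) * gfun C₀ (β - 4) r ≤ 0 :=
    mul_nonpos_of_nonpos_of_nonneg
      (mul_nonpos_of_nonneg_of_nonpos (by nlinarith) (by linarith)) (hg _)
  rw [radLap_radLap_sq_mul_gfun hr hL, mul_assoc (β * r ^ (-2 : ℤ)) _ (gfun C₀ (β - 1) r)]
  exact mul_le_mul_of_nonneg_left (by linarith) (by positivity)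

end LogPower

theorem stmt_7_general (n : ℕ) (hn : 2 < n) (C₀ β : ℝ) (hβ : β ∈ Set.Ioo (0:ℝ) 1)
    (r : ℝ) (hr : r ∈ Set.Ioo (0:ℝ) 1) (hlog : 1 ≤ C₀ - Real.log r) :
    radLap n (radLap n (fun s => s ^ 2 * gfun C₀ β s)) r ≤
      β * r ^ (-2 : ℤ) * (2 * n * ((n : ℝ) - 2)) * gfun C₀ (β - 1) r := by
  have hsharp :=
    radLap_radLap_sq_mul_gfun_le hn.le hβ.1 hβ.2 hr.1 (one_pos.trans_le hlog)
  have hn' : (2 : ℝ) < n := by exact_mod_cast hn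
  have hbound : 0 ≤ β * r ^ (-2 : ℤ) * (2 * n * ((n : ℝ) - 2)) * gfun C₀ (β - 1) r :=
    mul_nonneg (mul_nonneg (mul_nonneg hβ.1.le (zpow_nonneg hr.1.le _)) (by nlinarith))
      (Real.rpow_nonneg (by linarith) _)
  linarith

/-- For `β ∈ (0,1)`, `n > 2` and `C₀ > 0`, the radial biharmonic operator satisfies
`Δ²(r² g_β)(r) ≤ β r⁻² · 2n(n-2) · g_{β-1}(r)` for `r ∈ (0,1)` with `C₀ - log r ≥ 1`. -/
theorem stmt_7 (n : ℕ) (hn : 2 < n) (C₀ β : ℝ) (hC₀ : 0 < C₀) (hβ : β ∈ Set.Ioo (0:ℝ) 1)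
    (r : ℝ) (hr : r ∈ Set.Ioo (0:ℝ) 1) (hlog : 1 ≤ C₀ - Real.log r) :
    radLap n (radLap n (fun s => s ^ 2 * gfun C₀ β s)) r ≤
      β * r ^ (-2 : ℤ) * (2 * n * ((n : ℝ) - 2)) * gfun C₀ (β - 1) r :=
  stmt_7_general n hn C₀ β hβ r hr hlog
end
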